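/- arXiv:2205.14798 — 2 statements merged into one kernel-verified Lean document; each statement's English description precedes it below -/
import Mathlib

section
/- The AverageOrRandomRank-p mechanism is strategyproof in expectation if and only if p ∈ [0, 1/2]: for all agents i, profiles x ∈ [0,1]^n and misreports x_i', the truthful expected cost p·|x_i − avg(x)| + ((1−p)/n)·Σ_k |x_i − rank^k(x)| is at most p·|x_i − avg(x_i',x_{−i})| + ((1−p)/n)·Σ_k |x_i − rank^k(x_i',x_{−i})|; and for every p > 1/2 there exists a profile and misreport strictly decreasing some agent's expected cost. -/
/-- `rankK n k x` is the k-th largest of the coordinates of `x`. -/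
noncomputable def rankK (n k : ℕ) (x : Fin n → ℝ) : ℝ :=
  ((List.ofFn x).insertionSort (· ≥ ·)).getD (k - 1) 0

/-!
Random Rank picks each reported location with probability `1/n`, so when agent `i` reports `b`
instead of `x i` the Random Rank part of her cost rises by exactly `(1 - p) |x i - b| / n`, while
the average moves by `|x i - b| / n`, so the average part falls by at most `|p| |x i - b| / n`.
As `|p| ≤ 1 - p` exactly when `p ≤ 1/2`, misreporting never pays then. For `p > 1/2`, an agent
who stays below the average even after shading her report downwards (peak `1/2`, all others at
`1`, report `0`; this needs `n ≥ 2`) gains `(2p - 1) |x i - b| / n`.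
-/

open Finset Function

lemma sum_Icc_rankK {M : Type*} [AddCommMonoid M] (f : ℝ → M) (n : ℕ) (x : Fin n → ℝ) :
    ∑ k ∈ Icc 1 n, f (rankK n k x) = ∑ j, f (x j) := by
  set l := (List.ofFn x).insertionSort (· ≥ ·)
  have hperm : l.Perm (List.ofFn x) := List.perm_insertionSort _ _
  have hlen : l.length = n := by simp [l]
  calc ∑ k ∈ Icc 1 n, f (rankK n k x) = ∑ k ∈ range l.length, f (l.getD k 0) := by
        rw [hlen, ← Ico_add_one_right_eq_Icc, sum_Ico_eq_sum_range]
        simp [rankK, l, add_comm]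
    _ = (l.map f).sum := by
        rw [← Fin.sum_univ_eq_sum_range, ← List.sum_ofFn, ← List.ofFn_getElem_eq_map]
        simp
    _ = ((List.ofFn x).map f).sum := (hperm.map f).sum_eq
    _ = ∑ j, f (x j) := by simp [List.map_ofFn, List.sum_ofFn]

lemma sum_comp_update {ι α M : Type*} [Fintype ι] [DecidableEq ι] [AddCommGroup M]
    (g : α → M) (x : ι → α) (i : ι) (b : α) :
    ∑ j, g (update x i b j) = ∑ j, g (x j) - g (x i) + g b := by
  simp_rw [← comp_apply (f := g), comp_update, sum_update_of_mem (mem_univ i),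
    sdiff_singleton_eq_erase, ← sum_erase_add _ _ (mem_univ i), comp_apply]
  abel

lemma sum_update {ι M : Type*} [Fintype ι] [DecidableEq ι] [AddCommGroup M]
    (x : ι → M) (i : ι) (b : M) : ∑ j, update x i b j = ∑ j, x j - x i + b :=
  sum_comp_update id x i b

/-- `y` is the agent's true location, `x` the reported profile. -/
noncomputable def expectedCost (n : ℕ) (p y : ℝ) (x : Fin n → ℝ) : ℝ :=
  p * |y - (∑ j, x j) / n| + ((1 - p) / n) * ∑ k ∈ Icc 1 n, |y - rankK n k x|

section

variable {n : ℕ} {p : ℝ}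

lemma expectedCost_eq (y : ℝ) (x : Fin n → ℝ) :
    expectedCost n p y x = p * |y - (∑ j, x j) / n| + ((1 - p) / n) * ∑ j, |y - x j| := by
  rw [expectedCost, sum_Icc_rankK (fun t => |y - t|)]

lemma expectedCost_update_sub (x : Fin n → ℝ) (i : Fin n) (b : ℝ) :
    expectedCost n p (x i) (update x i b) - expectedCost n p (x i) x =
      p * (|x i - (∑ j, x j - x i + b) / n| - |x i - (∑ j, x j) / n|) +
        ((1 - p) / n) * |x i - b| := by
  simp only [expectedCost_eq, sum_update, sum_comp_update (fun t => |x i - t|), sub_self,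
    abs_zero]
  ring

theorem expectedCost_le_update (hp : p ≤ 1 / 2) (x : Fin n → ℝ) (i : Fin n) (b : ℝ) :
    expectedCost n p (x i) x ≤ expectedCost n p (x i) (update x i b) := by
  have hn : (0 : ℝ) < n := by exact_mod_cast i.pos
  set A := (∑ j, x j) / n
  set A' := (∑ j, x j - x i + b) / n
  set d := |x i - b| / n
  have hd : 0 ≤ d := by positivity
  have hshift : |(x i - A') - (x i - A)| = d := by
    rw [show (x i - A') - (x i - A) = (x i - b) / n by simp only [A, A']; field_simp; ring,
      abs_div, abs_of_pos hn]
  have havg : -(|p| * d) ≤ p * (|x i - A'| - |x i - A|) := by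
    refine le_trans ?_ (neg_abs_le _)
    rw [neg_le_neg_iff, abs_mul, ← hshift]
    exact mul_le_mul_of_nonneg_left (abs_abs_sub_abs_le_abs_sub _ _) (abs_nonneg p)
  have hp' : |p| * d ≤ (1 - p) * d :=
    mul_le_mul_of_nonneg_right (abs_le.mpr ⟨by linarith, by linarith⟩) hd
  rw [← sub_nonneg, expectedCost_update_sub, show (1 - p) / n * |x i - b| = (1 - p) * d by
    rw [mul_div_assoc']; ring]
  linarith

theorem expectedCost_update_lt (hp : 1 / 2 < p) (x : Fin n → ℝ) (i : Fin n) {b : ℝ}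
    (hb : b < x i) (hi : x i ≤ (∑ j, update x i b j) / n) :
    expectedCost n p (x i) (update x i b) < expectedCost n p (x i) x := by
  have hn : (0 : ℝ) < n := by exact_mod_cast i.pos
  rw [sum_update] at hi
  have hshift : (∑ j, x j) / n = (∑ j, x j - x i + b) / n + (x i - b) / n := by
    field_simp; ring
  set g := (x i - b) / n
  have hg : 0 < g := div_pos (sub_pos.2 hb) hn
  rw [← sub_neg, expectedCost_update_sub, abs_of_nonpos (sub_nonpos.2 hi),
    abs_of_nonpos (by linarith : x i - (∑ j, x j) / n ≤ 0), abs_of_pos (sub_pos.2 hb),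
    show (1 - p) / n * (x i - b) = (1 - p) * g by rw [mul_div_assoc']; ring, hshift]
  nlinarith

theorem exists_profitable_misreport (hn : 2 ≤ n) (hp : 1 / 2 < p) :
    ∃ (x : Fin n → ℝ) (i : Fin n) (b : ℝ), (∀ j, x j ∈ Set.Icc (0 : ℝ) 1) ∧ b ∈ Set.Icc (0 : ℝ) 1 ∧
      expectedCost n p (x i) (update x i b) < expectedCost n p (x i) x := by
  let i : Fin n := ⟨0, by omega⟩
  let x : Fin n → ℝ := update (fun _ => 1) i (1 / 2)
  have hxi : x i = 1 / 2 := by simp [x]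
  refine ⟨x, i, 0, fun j => ?_, by norm_num,
    expectedCost_update_lt hp x i (by rw [hxi]; norm_num) ?_⟩
  · rcases eq_or_ne j i with rfl | hj
    · rw [hxi]; norm_num
    · simp [x, hj]
  · have hN : (2 : ℝ) ≤ n := by exact_mod_cast hn
    have hsum : ∑ j, update x i 0 j = n - 1 := by
      rw [sum_update, sum_update]
      simp [x]
    rw [hxi, hsum, le_div_iff₀ (by linarith)]
    linarith

end

theorem averageOrRandomRank_strategyproof_iff_general (n : ℕ) (hn : 2 ≤ n)
    (p : ℝ) :
    (∀ (x : Fin n → ℝ) (i : Fin n) (x' : ℝ),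
      (∀ j, x j ∈ Set.Icc (0:ℝ) 1) → x' ∈ Set.Icc (0:ℝ) 1 →
      p * |x i - (∑ j, x j) / n| +
        ((1 - p) / n) * ∑ k ∈ Finset.Icc 1 n, |x i - rankK n k x| ≤
      p * |x i - (∑ j, Function.update x i x' j) / n| +
        ((1 - p) / n) *
          ∑ k ∈ Finset.Icc 1 n, |x i - rankK n k (Function.update x i x')|)
    ↔ p ≤ 1 / 2 := by
  refine ⟨fun H => ?_, fun hp x i b _ _ => expectedCost_le_update hp x i b⟩
  by_contra! hp
  obtain ⟨x, i, b, hx, hb, hlt⟩ := exists_profitable_misreport hn hp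
  exact (H x i b hx hb).not_gt hlt

/-- AverageOrRandomRank-p is strategyproof in expectation if and
only if p ∈ [0, 1/2]. -/
theorem averageOrRandomRank_strategyproof_iff (n : ℕ) (hn : 2 ≤ n)
    (p : ℝ) (hp0 : 0 ≤ p) (hp1 : p ≤ 1) :
    (∀ (x : Fin n → ℝ) (i : Fin n) (x' : ℝ),
      (∀ j, x j ∈ Set.Icc (0:ℝ) 1) → x' ∈ Set.Icc (0:ℝ) 1 →
      p * |x i - (∑ j, x j) / n| +
        ((1 - p) / n) * ∑ k ∈ Finset.Icc 1 n, |x i - rankK n k x| ≤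
      p * |x i - (∑ j, Function.update x i x' j) / n| +
        ((1 - p) / n) *
          ∑ k ∈ Finset.Icc 1 n, |x i - rankK n k (Function.update x i x')|)
    ↔ p ≤ 1 / 2 :=
  averageOrRandomRank_strategyproof_iff_general n hn p
end

section
/- Random Rank satisfies Strong Proportional Fairness in expectation: for any profile x ∈ [0,1]^n contained in an interval of length R, and any subset S of agents whose locations lie in an interval of length r, for every i ∈ S: (1/n)·Σ_{k=1}^n |x_i − rank^k(x)| ≤ R·(n−|S|)/n + r. -/
/-!
Sorting only permutes the coordinates, so the expected cost of agent `i` is the average distance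
from `x i` to all `n` agents. The `|S|` agents of `S` are within `r` of `x i` and the other
`n - |S|` within `R`, and `|S| / n ≤ 1` absorbs the factor in front of `r`.
-/

open Finset

theorem List.sum_map_eq_sum_range_getD {α M : Type*} [AddCommMonoid M] (l : List α) (d : α)
    (f : α → M) : (l.map f).sum = ∑ m ∈ Finset.range l.length, f (l.getD m d) := by
  rw [← Fin.sum_univ_fun_getElem, ← Fin.sum_univ_eq_sum_range (fun m => f (l.getD m d))]
  simp

theorem sum_comp_rankK {M : Type*} [AddCommMonoid M] (n : ℕ) (x : Fin n → ℝ) (f : ℝ → M) :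
    ∑ k ∈ Icc 1 n, f (rankK n k x) = ∑ j, f (x j) := by
  set L := (List.ofFn x).insertionSort (· ≥ ·)
  have hperm : L.Perm (List.ofFn x) := List.perm_insertionSort _ _
  have hlen : L.length = n := by simp [L]
  calc ∑ k ∈ Icc 1 n, f (rankK n k x) = ∑ m ∈ range L.length, f (L.getD m 0) := by
        rw [hlen, range_eq_Ico, ← sum_Ico_add_right_sub_eq (a := 0) (c := 1), zero_add,
          Ico_add_one_right_eq_Icc]
        rfl
    _ = (L.map f).sum := (List.sum_map_eq_sum_range_getD L 0 f).symm
    _ = ∑ j, f (x j) := by rw [(hperm.map f).sum_eq, List.map_ofFn, List.sum_ofFn]; rfl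

theorem Finset.sum_le_card_nsmul_add_card_compl_nsmul {ι M : Type*} [Fintype ι] [DecidableEq ι]
    [AddCommMonoid M] [PartialOrder M] [IsOrderedAddMonoid M] (S : Finset ι) (f : ι → M)
    (a b : M) (ha : ∀ j ∈ S, f j ≤ a) (hb : ∀ j ∈ Sᶜ, f j ≤ b) :
    ∑ j, f j ≤ #S • a + #Sᶜ • b := by
  rw [← sum_add_sum_compl S]
  exact add_le_add (sum_le_card_nsmul _ _ _ ha) (sum_le_card_nsmul _ _ _ hb)

theorem randomRank_strong_proportional_fairness_general (n : ℕ)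
    (x : Fin n → ℝ)
    (R r : ℝ) (hR : ∀ i j, |x i - x j| ≤ R)
    (S : Finset (Fin n)) (hr : ∀ i ∈ S, ∀ j ∈ S, |x i - x j| ≤ r) :
    ∀ i ∈ S, (1 / (n : ℝ)) * ∑ k ∈ Finset.Icc 1 n, |x i - rankK n k x| ≤
      R * (((n : ℝ) - S.card) / n) + r := by
  intro i hi
  have hr0 : 0 ≤ r := (abs_nonneg _).trans (hr i hi i hi)
  have hcard : #S ≤ n := by simpa using card_le_univ S
  have hfrac : (#S : ℝ) / n ≤ 1 := div_le_one_of_le₀ (by exact_mod_cast hcard) n.cast_nonneg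
  have hsum := sum_le_card_nsmul_add_card_compl_nsmul S (fun j => |x i - x j|) r R
    (hr i hi) (fun j _ => hR i j)
  rw [card_compl, Fintype.card_fin, nsmul_eq_mul, nsmul_eq_mul, Nat.cast_sub hcard] at hsum
  rw [sum_comp_rankK n x (fun v => |x i - v|)]
  calc 1 / (n : ℝ) * ∑ j, |x i - x j| ≤ 1 / n * (#S * r + (n - #S) * R) :=
        mul_le_mul_of_nonneg_left hsum (by positivity)
    _ = #S / n * r + R * ((n - #S) / n) := by ring
    _ ≤ R * ((n - #S) / n) + r := by nlinarith

/-- Random Rank satisfies Strong Proportional Fairness in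
expectation: if the whole profile lies within range R and the agents of S lie
within range r, then each agent of S has expected cost at most R(n−|S|)/n + r. -/
theorem randomRank_strong_proportional_fairness (n : ℕ) (hn : 1 ≤ n)
    (x : Fin n → ℝ) (hx : ∀ i, x i ∈ Set.Icc (0:ℝ) 1)
    (R r : ℝ) (hR : ∀ i j, |x i - x j| ≤ R)
    (S : Finset (Fin n)) (hr : ∀ i ∈ S, ∀ j ∈ S, |x i - x j| ≤ r) :
    ∀ i ∈ S, (1 / (n : ℝ)) * ∑ k ∈ Finset.Icc 1 n, |x i - rankK n k x| ≤
      R * (((n : ℝ) - S.card) / n) + r :=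
  randomRank_strong_proportional_fairness_general n x R r hR S hr
end
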